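/- arXiv:1707.03020 — 5 statements merged into one kernel-verified Lean document; each statement's English description precedes it below -/
import Mathlib

section
/- Let m be a natural number divisible by 6 and let s be a prime divisor of m such that 3 does not divide m/s. Then 3 divides (2^m - 1)/(2^{m/s} - 1). -/
theorem three_dvd_quotient (m : ℕ) (hm : 6 ∣ m) (s : ℕ) (hs : s.Prime) (hsm : s ∣ m)
    (h3 : ¬ 3 ∣ m / s) :
    3 ∣ (2 ^ m - 1) / (2 ^ (m / s) - 1) := by
  obtain ⟨t, rfl⟩ := hm
  have ht : t ≠ 0 := by
    rintro rfl
    exact h3 (by simp)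
  -- s = 3
  have hs3 : s = 3 := by
    have h3m : 3 ∣ 6 * t := ⟨2 * t, by ring⟩
    have hm' : 6 * t = (6 * t / s) * s := (Nat.div_mul_cancel hsm).symm
    have : (3 : ℕ) ∣ (6 * t / s) * s := hm' ▸ h3m
    rcases (Nat.Prime.dvd_mul (by norm_num)).mp this with h | h
    · exact absurd h h3
    · exact ((Nat.prime_dvd_prime_iff_eq (by norm_num) hs).mp h).symm
  subst hs3
  have hk : 6 * t / 3 = 2 * t := by omega
  rw [hk]
  set k := 2 * t with hkdef
  have hterm : 2 ^ (3 * k) - 1 = (2 ^ k - 1) * (2 ^ (2 * k) + 2 ^ k + 1) := by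
    have h1 : 1 ≤ 2 ^ k := Nat.one_le_two_pow
    have h2 : 2 ^ (3 * k) = 2 ^ k * 2 ^ k * 2 ^ k := by
      rw [← pow_add, ← pow_add]; ring_nf
    have h3 : 2 ^ (2 * k) = 2 ^ k * 2 ^ k := by rw [← pow_add]; ring_nf
    rw [h2, h3]
    cases' Nat.exists_eq_add_of_le h1 with a ha
    rw [ha, Nat.add_sub_cancel_left]; ring_nf; omega
  have h6k : 6 * t = 3 * k := by omega
  rw [h6k, hterm, Nat.mul_div_cancel_left _ (by
    have : 2 ≤ k := by omega
    have : 2 ^ 2 ≤ 2 ^ k := Nat.pow_le_pow_right (by norm_num) this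
    omega)]
  -- 2^k = 4^t ≡ 1 mod 3
  have h4 : 2 ^ k % 3 = 1 := by
    have : 2 ^ (2 * t) = 4 ^ t := by rw [pow_mul]; norm_num
    rw [hkdef, this, Nat.pow_mod]
    norm_num
  have h42 : 2 ^ (2 * k) % 3 = 1 := by
    have : 2 ^ (2 * k) = (2 ^ k) * (2 ^ k) := by rw [← pow_add]; ring_nf
    rw [this, Nat.mul_mod, h4]
  omega
end

section
/- Let q ≥ 2 and m ≥ 2 be integers such that m has at least two distinct prime divisors, and let s be a prime divisor of m. Assume that it is not the case that (2 divides m and q is odd), and not the case that (q = 2 and 6 divides m). Then (q^m - 1)/(q^{m/s} - 1) has at least two distinct prime divisors. -/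
/-!
Write `Q = (q ^ m - 1) / (q ^ (m / s) - 1)` and let `r ≠ s` be another prime factor of `m`. Since
`X ^ m - 1 = ∏_{d ∣ m} Φ_d`, both `Φₘ(q)` and `Φ_{m/r}(q)` divide `Q` (neither `m` nor `m / r`
divides `m / s`), and both exceed `1`. Take a prime `p ∣ Φₘ(q)`. If `p ∤ m`, then `q` has order `m`
modulo `p`; were `p` also a factor of `Φ_{m/r}(q)`, the order would be `m / r` as well, so any prime
factor of `Φ_{m/r}(q)` is a second prime. If `p ∣ m`, then `p` is odd by the parity hypothesis,
lifting the exponent shows `p ^ 2 ∤ Φₘ(q)`, and size estimates show `Φₘ(q) > p` (with the single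
exception `Φ₆(2) = 3`), so `Φₘ(q)` has a prime factor other than `p`.
-/

open Polynomial

theorem Nat.dvd_of_div_dvd_div {a s m : ℕ} (hm : m ≠ 0) (ha : a ∣ m) (hs : s ∣ m)
    (h : m / a ∣ m / s) : s ∣ a := by
  have hma : 0 < m / a := Nat.div_pos (Nat.le_of_dvd (Nat.pos_of_ne_zero hm) ha)
    (Nat.pos_of_dvd_of_pos ha (Nat.pos_of_ne_zero hm))
  refine Nat.dvd_of_mul_dvd_mul_right hma ?_
  calc s * (m / a) ∣ m := (Nat.dvd_div_iff_mul_dvd hs).1 h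
    _ = a * (m / a) := (Nat.mul_div_cancel' ha).symm

theorem Nat.not_dvd_div_of_one_lt {m p : ℕ} (hm : m ≠ 0) (hp : 1 < p) (hpm : p ∣ m) :
    ¬m ∣ m / p := fun h =>
  hp.ne' <| Nat.dvd_one.1 <| Nat.dvd_of_div_dvd_div hm (one_dvd m) hpm (by rwa [Nat.div_one])

theorem Nat.ordCompl_dvd_div {n p : ℕ} (hp : p.Prime) (hn : n ≠ 0) (hpn : p ∣ n) :
    ordCompl[p] n ∣ n / p :=
  Nat.dvd_div_of_mul_dvd <|
    (Nat.coprime_ordCompl hp hn).mul_dvd_of_dvd_of_dvd hpn (Nat.ordCompl_dvd n p)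

namespace Polynomial

theorem X_pow_sub_one_mul_cyclotomic_dvd (R : Type*) [CommRing R] {d n m : ℕ} (hn : n ∣ m)
    (hd : d ∣ m) (hnd : ¬n ∣ d) (hm : m ≠ 0) : (X ^ d - 1) * cyclotomic n R ∣ X ^ m - 1 := by
  rw [← X_pow_sub_one_mul_prod_cyclotomic_eq_X_pow_sub_one_of_dvd R hd hm]
  exact mul_dvd_mul_left _ (Finset.dvd_prod_of_mem _ (by simp [hn, hm, hnd]))

theorem sub_one_mul_natAbs_cyclotomic_eval_dvd {d n m q : ℕ} (hq : 0 < q) (hn : n ∣ m)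
    (hd : d ∣ m) (hnd : ¬n ∣ d) (hm : m ≠ 0) :
    (q ^ d - 1) * ((cyclotomic n ℤ).eval (q : ℤ)).natAbs ∣ q ^ m - 1 := by
  have h := eval_dvd (x := (q : ℤ)) (X_pow_sub_one_mul_cyclotomic_dvd ℤ hn hd hnd hm)
  have hcast : ∀ k, ((q : ℤ) ^ k - 1).natAbs = q ^ k - 1 := fun k => by
    rw [← Int.natAbs_natCast (q ^ k - 1), Nat.cast_sub (Nat.one_le_pow _ _ hq)]
    push_cast; rfl
  simpa [Int.natAbs_mul, hcast] using Int.natAbs_dvd_natAbs.2 h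

theorem natAbs_cyclotomic_eval_dvd_div {d n m q : ℕ} (hq : 0 < q) (hn : n ∣ m) (hd : d ∣ m)
    (hnd : ¬n ∣ d) (hm : m ≠ 0) :
    ((cyclotomic n ℤ).eval (q : ℤ)).natAbs ∣ (q ^ m - 1) / (q ^ d - 1) :=
  Nat.dvd_div_of_mul_dvd (sub_one_mul_natAbs_cyclotomic_eval_dvd hq hn hd hnd hm)

theorem one_lt_natAbs_cyclotomic_eval {n q : ℕ} (hn : 1 < n) (hq : 2 ≤ q) :
    1 < ((cyclotomic n ℤ).eval (q : ℤ)).natAbs := by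
  have := sub_one_lt_natAbs_cyclotomic_eval hn (show q ≠ 1 by omega)
  omega

theorem natAbs_cyclotomic_eval_le_add_one_pow_totient {q : ℕ} (hq : 1 < q) (n : ℕ) :
    ((cyclotomic n ℤ).eval (q : ℤ)).natAbs ≤ (q + 1) ^ n.totient := by
  have hcast : (((cyclotomic n ℤ).eval (q : ℤ) : ℤ) : ℝ) = (cyclotomic n ℝ).eval (q : ℝ) := by
    simpa using (cyclotomic.eval_apply (q : ℤ) n (algebraMap ℤ ℝ)).symm
  rw [← Nat.cast_le (α := ℝ), Nat.cast_natAbs, Int.cast_abs, hcast,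
    abs_of_nonneg (cyclotomic_nonneg n (by exact_mod_cast hq.le))]
  exact_mod_cast cyclotomic_eval_le_add_one_pow_totient (q := q) (by exact_mod_cast hq) n

theorem isPrimitiveRoot_ordCompl_of_dvd_natAbs_cyclotomic_eval {n p q : ℕ} [hp : Fact p.Prime]
    (hn : n ≠ 0) (h : p ∣ ((cyclotomic n ℤ).eval (q : ℤ)).natAbs) :
    IsPrimitiveRoot (q : ZMod p) (ordCompl[p] n) := by
  have : NeZero ((ordCompl[p] n : ℕ) : ZMod p) :=
    ⟨by rw [Ne, ZMod.natCast_eq_zero_iff]; exact Nat.not_dvd_ordCompl hp.out hn⟩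
  have hroot : (cyclotomic n (ZMod p)).IsRoot (q : ZMod p) := by
    rw [← Int.natCast_dvd, ← ZMod.intCast_zmod_eq_zero_iff_dvd] at h
    simpa [h] using cyclotomic.eval_apply (q : ℤ) n (Int.castRingHom (ZMod p))
  rw [← Nat.ordProj_mul_ordCompl_eq_self n p] at hroot
  exact isRoot_cyclotomic_prime_pow_mul_iff_of_charP.1 hroot

theorem isPrimitiveRoot_of_dvd_natAbs_cyclotomic_eval {n p q : ℕ} [Fact p.Prime] (hn : n ≠ 0)
    (hpn : ¬p ∣ n) (h : p ∣ ((cyclotomic n ℤ).eval (q : ℤ)).natAbs) :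
    IsPrimitiveRoot (q : ZMod p) n := by
  simpa [Nat.factorization_eq_zero_of_not_dvd hpn] using
    isPrimitiveRoot_ordCompl_of_dvd_natAbs_cyclotomic_eval hn h

theorem eq_of_dvd_natAbs_cyclotomic_eval {m n p q : ℕ} [Fact p.Prime] (hm : m ≠ 0) (hn : n ≠ 0)
    (hpm : ¬p ∣ m) (hpn : ¬p ∣ n) (hm' : p ∣ ((cyclotomic m ℤ).eval (q : ℤ)).natAbs)
    (hn' : p ∣ ((cyclotomic n ℤ).eval (q : ℤ)).natAbs) : m = n :=
  (isPrimitiveRoot_of_dvd_natAbs_cyclotomic_eval hm hpm hm').unique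
    (isPrimitiveRoot_of_dvd_natAbs_cyclotomic_eval hn hpn hn')

theorem not_dvd_of_dvd_natAbs_cyclotomic_eval {n p q : ℕ} (hp : p.Prime) (hn : n ≠ 0)
    (h : p ∣ ((cyclotomic n ℤ).eval (q : ℤ)).natAbs) : ¬p ∣ q := by
  have := Fact.mk hp
  rw [← ZMod.natCast_eq_zero_iff]
  exact (isPrimitiveRoot_ordCompl_of_dvd_natAbs_cyclotomic_eval hn h).ne_zero
    (Nat.ordCompl_pos p hn).ne'

/-- With `a = q ^ (m / p)` we have `(a - 1) Φₘ(q) ∣ a ^ p - 1` and `p ∣ a - 1`, while lifting the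
exponent gives `v_p(a ^ p - 1) = v_p(a - 1) + 1`. -/
theorem not_sq_dvd_natAbs_cyclotomic_eval {m p q : ℕ} (hp : p.Prime) (hodd : Odd p) (hq : 1 < q)
    (hm : m ≠ 0) (hpm : p ∣ m) (h : p ∣ ((cyclotomic m ℤ).eval (q : ℤ)).natAbs) :
    ¬p ^ 2 ∣ ((cyclotomic m ℤ).eval (q : ℤ)).natAbs := by
  have := Fact.mk hp
  set a := q ^ (m / p)
  have ha : 1 < a := Nat.one_lt_pow (Nat.div_pos (Nat.le_of_dvd (by omega) hpm) hp.pos).ne' hq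
  have hpa : p ∣ a - 1 := by
    have hζ := isPrimitiveRoot_ordCompl_of_dvd_natAbs_cyclotomic_eval hm h
    have : (a : ZMod p) = (1 : ℕ) := by
      obtain ⟨c, hc⟩ := Nat.ordCompl_dvd_div hp hm hpm
      simp [a, hc, pow_mul, hζ.pow_eq_one]
    exact (Nat.modEq_iff_dvd' ha.le).1 ((ZMod.natCast_eq_natCast_iff _ _ _).1 this).symm
  have hpa' : ¬p ∣ a := fun hpa' =>
    not_dvd_of_dvd_natAbs_cyclotomic_eval hp hm h (hp.dvd_of_dvd_pow hpa')
  have hlte : padicValNat p (a ^ p - 1) = padicValNat p (a - 1) + 1 := by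
    simpa using padicValNat.pow_sub_pow (y := 1) hodd ha hpa hpa' hp.ne_zero
  have hdvd : (a - 1) * ((cyclotomic m ℤ).eval (q : ℤ)).natAbs ∣ a ^ p - 1 := by
    rw [← pow_mul, Nat.div_mul_cancel hpm]
    exact sub_one_mul_natAbs_cyclotomic_eval_dvd (by omega) dvd_rfl (Nat.div_dvd_of_dvd hpm)
      (Nat.not_dvd_div_of_one_lt hm hp.one_lt hpm) hm
  intro hsq
  have := (padicValNat_dvd_iff_le (Nat.sub_ne_zero_of_lt (Nat.one_lt_pow hp.ne_zero ha))).1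
    ((pow_add p (padicValNat p (a - 1)) 2 ▸ mul_dvd_mul pow_padicValNat_dvd hsq).trans hdvd)
  omega

theorem prime_lt_natAbs_cyclotomic_eval_of_three_le {m p q : ℕ} (hp : p.Prime) (hq : 3 ≤ q)
    (hm : m ≠ 0) (hpm : p ∣ m) : p < ((cyclotomic m ℤ).eval (q : ℤ)).natAbs := by
  have htot : p - 1 ∣ m.totient := Nat.totient_prime hp ▸ Nat.totient_dvd_of_dvd hpm
  calc p ≤ 2 ^ (p - 1) := by have := Nat.lt_two_pow_self (n := p - 1); omega
    _ ≤ 2 ^ m.totient :=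
        Nat.pow_le_pow_right two_pos (Nat.le_of_dvd (Nat.totient_pos.2 (by omega)) htot)
    _ ≤ (q - 1) ^ m.totient := Nat.pow_le_pow_left (by omega) _
    _ < _ := sub_one_pow_totient_lt_natAbs_cyclotomic_eval
        (hp.one_lt.trans_le (Nat.le_of_dvd (by omega) hpm)) (by omega)

theorem prime_lt_natAbs_cyclotomic_eval_of_sq_dvd {m p q : ℕ} (hp : p.Prime) (hq : 2 ≤ q)
    (hm : m ≠ 0) (hpm : p ^ 2 ∣ m) : p < ((cyclotomic m ℤ).eval (q : ℤ)).natAbs := by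
  obtain ⟨n, rfl⟩ := hpm
  have hexp : cyclotomic (p ^ 2 * n) ℤ = expand ℤ p (cyclotomic (p * n) ℤ) := by
    rw [cyclotomic_expand_eq_cyclotomic hp (dvd_mul_right p n)]; ring_nf
  have hn : 1 < p * n :=
    one_lt_mul_of_lt_of_le hp.one_lt (Nat.pos_of_ne_zero (by rintro rfl; simp at hm))
  rw [hexp, expand_eval]
  calc p ≤ 2 ^ p - 1 := by have := Nat.lt_two_pow_self (n := p); omega
    _ ≤ q ^ p - 1 := Nat.sub_le_sub_right (Nat.pow_le_pow_left hq p) 1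
    _ < _ := by
      simpa using sub_one_lt_natAbs_cyclotomic_eval hn (q := q ^ p)
        (Nat.one_lt_pow hp.ne_zero (by omega)).ne'

/-- `Φₙ(2 ^ p) = Φₙₚ(2) Φₙ(2)` with `(2 ^ p - 1) ^ φ(n) < Φₙ(2 ^ p)` and `Φₙ(2) ≤ 3 ^ φ(n)`, so
`Φₙₚ(2) ≤ p` would force `2 ^ p - 1 < 3 p`. -/
theorem prime_lt_natAbs_cyclotomic_mul_eval_two {n p : ℕ} (hp : p.Prime) (hp5 : 5 ≤ p) (hn : 1 < n)
    (hpn : ¬p ∣ n) : p < ((cyclotomic (n * p) ℤ).eval 2).natAbs := by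
  have hexp : ((cyclotomic n ℤ).eval ((2 ^ p : ℕ) : ℤ)).natAbs =
      ((cyclotomic (n * p) ℤ).eval 2).natAbs * ((cyclotomic n ℤ).eval 2).natAbs := by
    rw [← Int.natAbs_mul, ← eval_mul, ← cyclotomic_expand_eq_cyclotomic_mul hp hpn, expand_eval]
    simp
  have hlow := sub_one_pow_totient_lt_natAbs_cyclotomic_eval hn
    (Nat.one_lt_pow hp.ne_zero one_lt_two).ne'
  have hup := natAbs_cyclotomic_eval_le_add_one_pow_totient one_lt_two n
  have htot := (Nat.totient_pos.2 (by omega : 0 < n)).ne'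
  by_contra! hle
  have : (2 ^ p - 1) ^ n.totient < (3 * p) ^ n.totient :=
    calc (2 ^ p - 1) ^ n.totient
        < ((cyclotomic (n * p) ℤ).eval 2).natAbs * ((cyclotomic n ℤ).eval 2).natAbs := hexp ▸ hlow
      _ ≤ p * 3 ^ n.totient := Nat.mul_le_mul hle (by simpa using hup)
      _ ≤ (3 * p) ^ n.totient := by
        rw [mul_pow, mul_comm]; exact Nat.mul_le_mul_left _ (Nat.le_self_pow htot p)
  have hlt := lt_of_pow_lt_pow_left₀ _ (Nat.zero_le _) this
  have h2p : 2 ^ p = 2 ^ 2 * 2 ^ (p - 2) := by rw [← pow_add, Nat.add_sub_cancel' (by omega)]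
  have := Nat.lt_two_pow_self (n := p - 2)
  omega

theorem prime_lt_natAbs_cyclotomic_eval {m p q : ℕ} (hp : p.Prime) (hp2 : p ≠ 2) (hq : 2 ≤ q)
    (hm : m ≠ 0) (hpm : p ∣ m) (h : p ∣ ((cyclotomic m ℤ).eval (q : ℤ)).natAbs)
    (h6 : ¬(q = 2 ∧ m = 6)) : p < ((cyclotomic m ℤ).eval (q : ℤ)).natAbs := by
  obtain hq3 | rfl := hq.lt_or_eq'
  · exact prime_lt_natAbs_cyclotomic_eval_of_three_le hp hq3 hm hpm
  by_cases hsq : p ^ 2 ∣ m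
  · exact prime_lt_natAbs_cyclotomic_eval_of_sq_dvd hp le_rfl hm hsq
  have := Fact.mk hp
  set n := ordCompl[p] m
  have hmn : m = n * p := by
    have hfac : m.factorization p = 1 := by
      have := (hp.pow_dvd_iff_le_factorization hm).not.1 hsq
      have := (hp.dvd_iff_one_le_factorization hm).1 hpm
      omega
    rw [mul_comm, ← pow_one p, ← hfac, Nat.ordProj_mul_ordCompl_eq_self]
  have hζ : IsPrimitiveRoot ((2 : ℕ) : ZMod p) n :=
    isPrimitiveRoot_ordCompl_of_dvd_natAbs_cyclotomic_eval hm h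
  have hn1 : n ≠ 1 := by
    rintro hn
    have h21 : ((2 : ℕ) : ZMod p) = (1 : ℕ) := by simpa [hn] using hζ.pow_eq_one
    have := (Nat.modEq_iff_dvd' one_le_two).1 ((ZMod.natCast_eq_natCast_iff _ _ _).1 h21).symm
    exact hp.one_lt.ne' (Nat.dvd_one.1 this)
  have hn0 : n ≠ 0 := (Nat.ordCompl_pos p hm).ne'
  obtain rfl | hp5 : p = 3 ∨ 5 ≤ p := by
    obtain ⟨k, rfl⟩ := hp.odd_of_ne_two hp2
    have : k ≠ 0 := by rintro rfl; exact Nat.not_prime_one hp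
    omega
  · have hn2 : n ∣ 2 := hζ.dvd_of_pow_eq_one 2 rfl
    have : n = 2 := by have := Nat.le_of_dvd two_pos hn2; omega
    exact absurd ⟨rfl, by omega⟩ h6
  · have hn : 1 < n := lt_of_le_of_ne (Nat.one_le_iff_ne_zero.2 hn0) (Ne.symm hn1)
    rw [hmn]
    exact prime_lt_natAbs_cyclotomic_mul_eval_two hp hp5 hn (Nat.not_dvd_ordCompl hp hm)

theorem exists_prime_ne_dvd_natAbs_cyclotomic_eval {m p q : ℕ} (hp : p.Prime) (hp2 : p ≠ 2)
    (hq : 2 ≤ q) (hm : m ≠ 0) (hpm : p ∣ m) (h : p ∣ ((cyclotomic m ℤ).eval (q : ℤ)).natAbs)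
    (h6 : ¬(q = 2 ∧ m = 6)) :
    ∃ l, l.Prime ∧ l ≠ p ∧ l ∣ ((cyclotomic m ℤ).eval (q : ℤ)).natAbs := by
  by_contra! hl
  have hlt := prime_lt_natAbs_cyclotomic_eval hp hp2 hq hm hpm h h6
  have hpow := Nat.eq_prime_pow_of_unique_prime_dvd
    (n := ((cyclotomic m ℤ).eval (q : ℤ)).natAbs) (by omega)
    fun hd hdvd => by_contra fun hne => hl _ hd hne hdvd
  rw [hpow] at hlt
  refine not_sq_dvd_natAbs_cyclotomic_eval hp (hp.odd_of_ne_two hp2) hq hm hpm h ?_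
  rw [hpow]
  exact pow_dvd_pow p ((Nat.pow_lt_pow_iff_right hp.one_lt).1 (by simpa using hlt))

theorem exists_two_primes_dvd_of_natAbs_cyclotomic_eval_dvd {m n q N : ℕ} (hq : 2 ≤ q)
    (hm : m ≠ 0) (hn : 1 < n) (hnm : n ∣ m) (hne : n ≠ m) (h2 : ¬(2 ∣ m ∧ Odd q))
    (h6 : ¬(q = 2 ∧ m = 6)) (hmN : ((cyclotomic m ℤ).eval (q : ℤ)).natAbs ∣ N)
    (hnN : ((cyclotomic n ℤ).eval (q : ℤ)).natAbs ∣ N) :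
    ∃ p₁ p₂ : ℕ, p₁.Prime ∧ p₂.Prime ∧ p₁ ≠ p₂ ∧ p₁ ∣ N ∧ p₂ ∣ N := by
  obtain ⟨p, hp, hpΦ⟩ := Nat.exists_prime_and_dvd
    (one_lt_natAbs_cyclotomic_eval (hn.trans_le (Nat.le_of_dvd (by omega) hnm)) hq).ne'
  by_cases hpm : p ∣ m
  · have hp2 : p ≠ 2 := fun hp2 => h2 ⟨hp2 ▸ hpm, Nat.odd_iff.2 <| Nat.two_dvd_ne_zero.1 <|
      hp2 ▸ not_dvd_of_dvd_natAbs_cyclotomic_eval hp hm hpΦ⟩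
    obtain ⟨l, hl, hlp, hlΦ⟩ := exists_prime_ne_dvd_natAbs_cyclotomic_eval hp hp2 hq hm hpm hpΦ h6
    exact ⟨p, l, hp, hl, hlp.symm, hpΦ.trans hmN, hlΦ.trans hmN⟩
  · obtain ⟨p', hp', hp'Φ⟩ := Nat.exists_prime_and_dvd (one_lt_natAbs_cyclotomic_eval hn hq).ne'
    refine ⟨p, p', hp, hp', fun hpp => ?_, hpΦ.trans hmN, hp'Φ.trans hnN⟩
    have := Fact.mk hp
    exact hne (eq_of_dvd_natAbs_cyclotomic_eval (by omega) hm (fun h => hpm (h.trans hnm)) hpm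
      (hpp ▸ hp'Φ) hpΦ)

end Polynomial

theorem quotient_has_two_prime_divisors (q m : ℕ) (hq : 2 ≤ q) (hm : 2 ≤ m)
    (hm2 : ∃ p₁ p₂ : ℕ, p₁.Prime ∧ p₂.Prime ∧ p₁ ≠ p₂ ∧ p₁ ∣ m ∧ p₂ ∣ m)
    (s : ℕ) (hs : s.Prime) (hsm : s ∣ m)
    (h1 : ¬ (2 ∣ m ∧ Odd q)) (h2 : ¬ (q = 2 ∧ 6 ∣ m)) :
    ∃ p₁ p₂ : ℕ, p₁.Prime ∧ p₂.Prime ∧ p₁ ≠ p₂ ∧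
      p₁ ∣ (q ^ m - 1) / (q ^ (m / s) - 1) ∧ p₂ ∣ (q ^ m - 1) / (q ^ (m / s) - 1) := by
  obtain ⟨r, hr, hrm, hrs⟩ : ∃ r, r.Prime ∧ r ∣ m ∧ r ≠ s := by
    obtain ⟨p₁, p₂, hp₁, hp₂, hne, hp₁m, hp₂m⟩ := hm2
    by_cases h : p₁ = s
    · exact ⟨p₂, hp₂, hp₂m, h ▸ hne.symm⟩
    · exact ⟨p₁, hp₁, hp₁m, h⟩
  have hm0 : m ≠ 0 := by omega
  have hms : ¬m ∣ m / s := Nat.not_dvd_div_of_one_lt hm0 hs.one_lt hsm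
  have hmr : ¬m / r ∣ m / s := fun h =>
    hrs ((Nat.prime_dvd_prime_iff_eq hs hr).1 (Nat.dvd_of_div_dvd_div hm0 hrm hsm h)).symm
  have hmr1 : 1 < m / r := Nat.one_lt_iff_ne_zero_and_ne_one.2
    ⟨(Nat.div_pos (Nat.le_of_dvd (by omega) hrm) hr.pos).ne', fun h => hmr (h ▸ one_dvd _)⟩
  have hq0 : 0 < q := by omega
  exact exists_two_primes_dvd_of_natAbs_cyclotomic_eval_dvd hq hm0 hmr1 (Nat.div_dvd_of_dvd hrm)
    (Nat.div_lt_self (by omega) hr.one_lt).ne h1 (fun h6 => h2 ⟨h6.1, h6.2 ▸ dvd_rfl⟩)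
    (natAbs_cyclotomic_eval_dvd_div hq0 dvd_rfl (Nat.div_dvd_of_dvd hsm) hms hm0)
    (natAbs_cyclotomic_eval_dvd_div hq0 (Nat.div_dvd_of_dvd hrm) (Nat.div_dvd_of_dvd hsm) hmr hm0)
end

section
/- Let Γ be a finite simple graph on k ≥ 5 vertices satisfying Pálfy's condition. Suppose p₁ and p₂ are adjacent vertices, each of degree exactly 2, with no common neighbor. Let q₁ be the neighbor of p₁ other than p₂, and q₂ the neighbor of p₂ other than p₁. Then every vertex r not in {p₁, p₂, q₁, q₂} is adjacent to q₁, to q₂, and to every other vertex s not in {p₁, p₂} (with s ≠ r), and r is not adjacent to p₁ or p₂. -/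
theorem palfy_structure {V : Type*} [Fintype V] [DecidableEq V] (k : ℕ) (hk : 5 ≤ k)
    (hcard : Fintype.card V = k) (Γ : SimpleGraph V) [DecidableRel Γ.Adj]
    (hpalfy : ∀ a b c : V, a ≠ b → a ≠ c → b ≠ c → Γ.Adj a b ∨ Γ.Adj a c ∨ Γ.Adj b c)
    (p₁ p₂ q₁ q₂ : V)
    (hadj : Γ.Adj p₁ p₂) (hd₁ : Γ.degree p₁ = 2) (hd₂ : Γ.degree p₂ = 2)
    (hno : ∀ x : V, ¬ (Γ.Adj p₁ x ∧ Γ.Adj p₂ x))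
    (hq₁ : Γ.Adj p₁ q₁) (hq₁ne : q₁ ≠ p₂)
    (hq₂ : Γ.Adj p₂ q₂) (hq₂ne : q₂ ≠ p₁) :
    ∀ r : V, r ∉ ({p₁, p₂, q₁, q₂} : Set V) →
      Γ.Adj r q₁ ∧ Γ.Adj r q₂ ∧
      (∀ s : V, s ∉ ({p₁, p₂} : Set V) → s ≠ r → Γ.Adj r s) ∧
      ¬ Γ.Adj r p₁ ∧ ¬ Γ.Adj r p₂ := by
  have hn1 : ∀ x, Γ.Adj p₁ x → x = p₂ ∨ x = q₁ := by
    have hsub : ({p₂, q₁} : Finset V) ⊆ Γ.neighborFinset p₁ := by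
      intro x hx
      simp only [Finset.mem_insert, Finset.mem_singleton] at hx
      rcases hx with rfl | rfl <;> simp [hadj, hq₁]
    have hcard2 : ({p₂, q₁} : Finset V).card = 2 := by
      rw [Finset.card_insert_of_notMem (by simp [Ne.symm hq₁ne]), Finset.card_singleton]
    have heq : Γ.neighborFinset p₁ = ({p₂, q₁} : Finset V) :=
      (Finset.eq_of_subset_of_card_le hsub (by rw [hcard2]; exact le_of_eq hd₁)).symm
    intro x hx
    have : x ∈ Γ.neighborFinset p₁ := by simpa using hx
    rw [heq] at this
    simpa using this
  have hn2 : ∀ x, Γ.Adj p₂ x → x = p₁ ∨ x = q₂ := by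
    have hsub : ({p₁, q₂} : Finset V) ⊆ Γ.neighborFinset p₂ := by
      intro x hx
      simp only [Finset.mem_insert, Finset.mem_singleton] at hx
      rcases hx with rfl | rfl <;> simp [hadj.symm, hq₂]
    have hcard2 : ({p₁, q₂} : Finset V).card = 2 := by
      rw [Finset.card_insert_of_notMem (by simp [Ne.symm hq₂ne]), Finset.card_singleton]
    have heq : Γ.neighborFinset p₂ = ({p₁, q₂} : Finset V) :=
      (Finset.eq_of_subset_of_card_le hsub (by rw [hcard2]; exact le_of_eq hd₂)).symm
    intro x hx
    have : x ∈ Γ.neighborFinset p₂ := by simpa using hx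
    rw [heq] at this
    simpa using this
  have hnp2q1 : ¬ Γ.Adj p₂ q₁ := fun h => hno q₁ ⟨hq₁, h⟩
  have hnp1q2 : ¬ Γ.Adj p₁ q₂ := fun h => hno q₂ ⟨h, hq₂⟩
  intro r hr
  simp only [Set.mem_insert_iff, Set.mem_singleton_iff, not_or] at hr
  obtain ⟨hr1, hr2, hr3, hr4⟩ := hr
  have hnr1 : ¬ Γ.Adj r p₁ := by
    intro h
    rcases hn1 r h.symm with rfl | rfl
    · exact hr2 rfl
    · exact hr3 rfl
  have hnr2 : ¬ Γ.Adj r p₂ := by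
    intro h
    rcases hn2 r h.symm with rfl | rfl
    · exact hr1 rfl
    · exact hr4 rfl
  have hrq1 : Γ.Adj r q₁ := by
    rcases hpalfy p₂ r q₁ (Ne.symm hr2) (Ne.symm hq₁ne) (fun h => hr3 h) with h | h | h
    · exact absurd h.symm hnr2
    · exact absurd h hnp2q1
    · exact h
  have hrq2 : Γ.Adj r q₂ := by
    rcases hpalfy p₁ r q₂ (Ne.symm hr1) (Ne.symm hq₂ne) (fun h => hr4 h) with h | h | h
    · exact absurd h.symm hnr1
    · exact absurd h hnp1q2
    · exact h
  refine ⟨hrq1, hrq2, ?_, hnr1, hnr2⟩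
  intro s hs hsr
  simp only [Set.mem_insert_iff, Set.mem_singleton_iff, not_or] at hs
  obtain ⟨hs1, hs2⟩ := hs
  by_cases h1 : s = q₁
  · subst h1; exact hrq1
  by_cases h2 : s = q₂
  · subst h2; exact hrq2
  have hnp1s : ¬ Γ.Adj p₁ s := by
    intro h
    rcases hn1 s h with rfl | rfl
    · exact hs2 rfl
    · exact h1 rfl
  rcases hpalfy p₁ r s (Ne.symm hr1) (Ne.symm hs1) (Ne.symm hsr) with h | h | h
  · exact absurd h.symm hnr1
  · exact absurd h hnp1s
  · exact h
end

section
/- Let G be a finite group whose Frattini subgroup is trivial. Then the Fitting subgroup F(G) is a direct product of abelian minimal normal subgroups of G; in particular, F(G) is abelian. -/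
/-!
If `Φ(G) = 1`, every nontrivial subgroup `D` misses some maximal subgroup `M`, and when `D` is
normal and lies in `K`, Dedekind's law gives `K = D(M ∩ K)`. Applied inside a normal nilpotent
`H`, whose maximal subgroups are normal with abelian quotients, this gives
`H' ≤ Φ(H) ≤ Φ(G) = 1`, so `H` is abelian. Applied to a minimal supplement `K` of an abelian normal
subgroup `A` (so that `A ∩ K` is normal), it shows `A ∩ K = 1`: abelian normal subgroups are
complemented. Splitting off minimal normal subgroups one at a time then writes every abelian
normal subgroup as a direct product of minimal normal ones. Distinct minimal normal subgroups
commute, so the Fitting subgroup, generated by abelian minimal normal subgroups, is abelian and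
decomposes in the same way.
-/

/-- The Fitting subgroup of a group: the join of all normal nilpotent subgroups. -/
def fittingSubgroup (G : Type*) [Group G] : Subgroup G :=
  ⨆ H ∈ {H : Subgroup G | H.Normal ∧ Group.IsNilpotent H}, H

/-- A minimal normal subgroup. -/
def IsMinimalNormal {G : Type*} [Group G] (H : Subgroup G) : Prop :=
  H.Normal ∧ H ≠ ⊥ ∧ ∀ K : Subgroup G, K.Normal → K ≤ H → K = ⊥ ∨ K = H

open Subgroup Pointwise

section

variable {G : Type*} [Group G]

lemma Subgroup.sup_inf_assoc_of_le_of_coe_sup_eq_mul {A B C : Subgroup G}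
    (hAB : ((A ⊔ B : Subgroup G) : Set G) = A * B) (hAC : A ≤ C) :
    (A ⊔ B) ⊓ C = A ⊔ B ⊓ C := by
  refine le_antisymm (fun x hx => ?_)
    (le_inf (sup_le_sup_left inf_le_left A) (sup_le hAC inf_le_right))
  have hx' : x ∈ (A : Set G) * ↑(B ⊓ C) := by
    rw [mul_inf_assoc A B C hAC, ← hAB]
    exact hx
  exact mul_subset (fun _ h => mem_sup_left h) (fun _ h => mem_sup_right h) hx'

lemma Subgroup.sup_inf_assoc_of_le_of_normal_left {A B C : Subgroup G} [A.Normal] (hAC : A ≤ C) :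
    (A ⊔ B) ⊓ C = A ⊔ B ⊓ C :=
  sup_inf_assoc_of_le_of_coe_sup_eq_mul (normal_mul A B) hAC

lemma Subgroup.sup_inf_assoc_of_le_of_normal_right {A B C : Subgroup G} [B.Normal] (hAC : A ≤ C) :
    (A ⊔ B) ⊓ C = A ⊔ B ⊓ C :=
  sup_inf_assoc_of_le_of_coe_sup_eq_mul (mul_normal A B) hAC

lemma Subgroup.le_centralizer_self_of_le {N A : Subgroup G} (hNA : N ≤ A)
    (hA : A ≤ centralizer A) : N ≤ centralizer N :=
  hNA.trans (hA.trans (centralizer_le hNA))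

lemma Subgroup.sup_inf_eq_of_isCoatom_of_not_le {D M K : Subgroup G} [D.Normal]
    (hM : IsCoatom M) (hDM : ¬ D ≤ M) (hDK : D ≤ K) : D ⊔ M ⊓ K = K := by
  rw [← sup_inf_assoc_of_le_of_normal_left hDK, hM.2 _ (right_lt_sup.mpr hDM), top_inf_eq]

lemma Subgroup.normal_inf_of_sup_eq_top {A B K : Subgroup G} [A.Normal]
    (hB : B ≤ centralizer A) (hBK : B ⊔ K = ⊤) : (A ⊓ K).Normal := by
  rw [← normalizer_eq_top_iff, eq_top_iff, ← hBK]
  refine sup_le ((hB.trans (centralizer_le inf_le_left)).trans (centralizer_le_normalizer _)) ?_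
  refine le_trans ?_ inf_normalizer_le_normalizer_inf
  rw [normalizer_eq_top, top_inf_eq]
  exact le_normalizer

lemma sSupIndep_insert_of_normal {s : Set (Subgroup G)} (hs : sSupIndep s) {N : Subgroup G}
    [N.Normal] (hN : Disjoint N (sSup s)) : sSupIndep (insert N s) := by
  have hN' : Disjoint N (sSup (insert N s \ {N})) :=
    hN.mono_right (sSup_le_sSup (Set.sdiff_singleton_subset_iff.mpr subset_rfl))
  rintro H (rfl | hH)
  · exact hN'
  obtain rfl | hHN := eq_or_ne H N
  · exact hN'
  rw [Set.insert_sdiff_of_notMem s (show N ∉ ({H} : Set _) from hHN.symm), sSup_insert,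
    disjoint_iff, eq_bot_iff]
  set X := sSup (s \ {H})
  have hXs : X ≤ sSup s := sSup_le_sSup Set.sdiff_subset
  calc H ⊓ (N ⊔ X) ≤ H ⊓ ((X ⊔ N) ⊓ sSup s) :=
        le_inf inf_le_left (le_inf (sup_comm N X ▸ inf_le_right) (inf_le_left.trans (le_sSup hH)))
    _ = H ⊓ X := by rw [sup_inf_assoc_of_le_of_normal_right hXs, disjoint_iff.mp hN, sup_bot_eq]
    _ ≤ ⊥ := (hs hH).le_bot

lemma Subgroup.commutator_le_of_isCoatom {M : Subgroup G} [M.Normal] (hM : IsCoatom M) :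
    _root_.commutator G ≤ M := by
  obtain ⟨x, -, hx⟩ := SetLike.exists_of_lt hM.lt_top
  exact Normal.commutator_le_of_self_sup_commutative_eq_top
    (hM.2 _ (left_lt_sup.mpr fun h => hx (h (mem_zpowers x)))) inferInstance

lemma commutator_le_frattini [Finite G] [Group.IsNilpotent G] :
    _root_.commutator G ≤ frattini G :=
  le_iInf₂ fun M hM =>
    have := NormalizerCondition.normal_of_coatom M Group.normalizerCondition_of_isNilpotent hM
    commutator_le_of_isCoatom hM

lemma map_subtype_frattini_le [Finite G] (H : Subgroup G) [H.Normal] :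
    (frattini H).map H.subtype ≤ frattini G := by
  refine le_iInf₂ fun M hM => ?_
  by_contra hDM
  have hH := sup_inf_eq_of_isCoatom_of_not_le hM hDM (map_subtype_le _)
  have hgen : M.subgroupOf H ⊔ frattini H = ⊤ := by
    apply map_injective H.subtype_injective
    rw [Subgroup.map_sup, subgroupOf_map_subtype, sup_comm, hH, ← MonoidHom.range_eq_map,
      range_subtype]
  exact hDM ((map_subtype_le _).trans (subgroupOf_eq_top.mp (frattini_nongenerating hgen)))

lemma exists_isCoatom_not_le_of_frattini_eq_bot (hfr : frattini G = ⊥) {D : Subgroup G}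
    (hD : D ≠ ⊥) : ∃ M : Subgroup G, IsCoatom M ∧ ¬ D ≤ M := by
  by_contra! h
  exact hD (le_bot_iff.mp (hfr ▸ le_iInf₂ h))

lemma le_centralizer_of_normal_of_isNilpotent [Finite G] (hfr : frattini G = ⊥) (H : Subgroup G)
    [H.Normal] [Group.IsNilpotent H] : H ≤ centralizer H := by
  rw [← commutator_eq_bot_iff_le_centralizer, ← map_subtype_commutator, eq_bot_iff, ← hfr]
  exact (map_mono commutator_le_frattini).trans (map_subtype_frattini_le H)

lemma exists_isCompl_of_le_centralizer [Finite G] (hfr : frattini G = ⊥) {A : Subgroup G}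
    [A.Normal] (hA : A ≤ centralizer A) : ∃ K : Subgroup G, IsCompl A K := by
  obtain ⟨K, -, hK⟩ :=
    exists_minimal_le_of_wellFoundedLT (fun K : Subgroup G => A ⊔ K = ⊤) ⊤ (sup_top_eq A)
  refine ⟨K, .of_eq ?_ hK.prop⟩
  by_contra hD
  have : (A ⊓ K).Normal := normal_inf_of_sup_eq_top hA hK.prop
  obtain ⟨M, hM, hDM⟩ := exists_isCoatom_not_le_of_frattini_eq_bot hfr hD
  have hKM : K = A ⊓ K ⊔ M ⊓ K := (sup_inf_eq_of_isCoatom_of_not_le hM hDM inf_le_right).symm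
  have hgen : A ⊔ M ⊓ K = ⊤ := by
    refine top_le_iff.mp (hK.prop ▸ sup_le le_sup_left ?_)
    calc K = A ⊓ K ⊔ M ⊓ K := hKM
      _ ≤ A ⊔ M ⊓ K := sup_le_sup_right inf_le_left _
  exact hDM (inf_le_right.trans ((hK.2 hgen inf_le_right).trans inf_le_left))

lemma exists_isMinimalNormal_le [Finite G] {A : Subgroup G} (hA : A.Normal) (hne : A ≠ ⊥) :
    ∃ N : Subgroup G, IsMinimalNormal N ∧ N ≤ A := by
  obtain ⟨N, -, hN⟩ := exists_minimal_le_of_wellFoundedLT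
    (fun K : Subgroup G => K.Normal ∧ K ≠ ⊥ ∧ K ≤ A) A ⟨hA, hne, le_rfl⟩
  refine ⟨N, ⟨hN.prop.1, hN.prop.2.1, fun K hK hKN => ?_⟩, hN.prop.2.2⟩
  by_cases hKbot : K = ⊥
  · exact .inl hKbot
  · exact .inr (le_antisymm hKN (hN.2 ⟨hK, hKbot, hKN.trans hN.prop.2.2⟩ hKN))

lemma IsMinimalNormal.le_centralizer {N₁ N₂ : Subgroup G} (h₁ : IsMinimalNormal N₁)
    (h₂ : IsMinimalNormal N₂) (hN₂ : N₂ ≤ centralizer N₂) :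
    N₁ ≤ centralizer N₂ := by
  obtain rfl | hne := eq_or_ne N₁ N₂
  · exact hN₂
  have := h₁.1
  have := h₂.1
  have hdisj : Disjoint N₁ N₂ := by
    refine disjoint_iff.mpr ((h₁.2.2 _ inferInstance inf_le_left).resolve_right fun h => ?_)
    exact (h₂.2.2 N₁ h₁.1 (h ▸ inf_le_right)).elim h₁.2.1 hne
  exact fun x hx => mem_centralizer_iff.mpr fun y hy =>
    (commute_of_normal_of_disjoint N₂ N₁ h₂.1 h₁.1 hdisj.symm y x hy hx).eq

lemma sSup_le_centralizer_sSup {S : Set (Subgroup G)}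
    (h : ∀ A ∈ S, ∀ B ∈ S, A ≤ centralizer B) :
    sSup S ≤ centralizer (sSup S : Subgroup G) :=
  sSup_le fun A hA => le_centralizer_iff.mpr (sSup_le fun B hB => h B hB A hA)

lemma mul_comm_of_le_centralizer {K : Subgroup G} (h : K ≤ centralizer K) (x y : K) :
    x * y = y * x :=
  Subtype.ext (mem_centralizer_iff.mp (h y.2) x x.2)

lemma exists_sSupIndep_isMinimalNormal_of_le_centralizer [Finite G] (hfr : frattini G = ⊥)
    (A : Subgroup G) (hAn : A.Normal) (hA : A ≤ centralizer A) :
    ∃ s : Finset (Subgroup G), (∀ N ∈ s, IsMinimalNormal N ∧ N ≤ A) ∧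
      sSupIndep (s : Set (Subgroup G)) ∧ sSup (s : Set (Subgroup G)) = A := by
  classical
  induction A using WellFoundedLT.induction with
  | _ A ih =>
  obtain rfl | hne := eq_or_ne A ⊥
  · exact ⟨∅, by simp, by simp, by simp⟩
  obtain ⟨N, hN, hNA⟩ := exists_isMinimalNormal_le hAn hne
  have := hN.1
  obtain ⟨K, hK⟩ := exists_isCompl_of_le_centralizer hfr (le_centralizer_self_of_le hNA hA)
  have := hAn
  have hA' : (A ⊓ K).Normal := normal_inf_of_sup_eq_top (hNA.trans hA) hK.sup_eq_top
  have hNA' : N ⊔ A ⊓ K = A := by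
    rw [inf_comm, ← sup_inf_assoc_of_le_of_normal_left hNA, hK.sup_eq_top, top_inf_eq]
  have hlt : A ⊓ K < A := by
    refine inf_le_left.lt_of_ne fun h => hN.2.1 ?_
    rw [eq_bot_iff, ← hK.inf_eq_bot]
    exact le_inf le_rfl ((h ▸ hNA).trans inf_le_right)
  obtain ⟨s, hs, hind, hsup⟩ := ih _ hlt hA' (le_centralizer_self_of_le inf_le_left hA)
  refine ⟨insert N s, ?_, ?_, ?_⟩
  · simp only [Finset.mem_insert, forall_eq_or_imp]
    exact ⟨⟨hN, hNA⟩, fun H hH => ⟨(hs H hH).1, (hs H hH).2.trans inf_le_left⟩⟩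
  · rw [Finset.coe_insert]
    exact sSupIndep_insert_of_normal hind (hsup ▸ hK.disjoint.mono_right inf_le_right)
  · rw [Finset.coe_insert, sSup_insert, hsup, hNA']

end

theorem fitting_of_frattini_trivial (G : Type*) [Group G] [Finite G]
    (hfr : frattini G = ⊥) :
    (∃ s : Finset (Subgroup G),
      (∀ H ∈ s, IsMinimalNormal H ∧ ∀ x y : H, x * y = y * x) ∧
      iSupIndep (fun H : s => (H : Subgroup G)) ∧
      (⨆ H ∈ s, H) = fittingSubgroup G) ∧
    ∀ x y : fittingSubgroup G, x * y = y * x := by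
  set F := fittingSubgroup G
  set S := {N : Subgroup G | IsMinimalNormal N ∧ N ≤ centralizer N}
  have hFS : F ≤ sSup S := by
    refine iSup₂_le fun H ⟨hHn, hHnil⟩ => ?_
    have hH := le_centralizer_of_normal_of_isNilpotent hfr H
    obtain ⟨s, hs, -, hsup⟩ := exists_sSupIndep_isMinimalNormal_of_le_centralizer hfr H hHn hH
    exact hsup ▸ sSup_le_sSup fun N hN =>
      ⟨(hs N hN).1, le_centralizer_self_of_le (hs N hN).2 hH⟩
  have hS : sSup S ≤ centralizer (sSup S : Subgroup G) :=
    sSup_le_centralizer_sSup fun A hA B hB => hA.1.le_centralizer hB.1 hB.2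
  have hF : F ≤ centralizer F := hFS.trans (hS.trans (centralizer_le hFS))
  have hFn : F.Normal := biSup_normal _ _ fun H hH => hH.1
  obtain ⟨s, hs, hind, hsup⟩ := exists_sSupIndep_isMinimalNormal_of_le_centralizer hfr F hFn hF
  refine ⟨⟨s, fun H hH => ⟨(hs H hH).1, ?_⟩, (sSupIndep_iff _).mp hind, ?_⟩,
    mul_comm_of_le_centralizer hF⟩
  · exact mul_comm_of_le_centralizer (le_centralizer_self_of_le (hs H hH).2 hF)
  · rw [← hsup, sSup_eq_iSup]
    rfl
end

section
/- Let G be a finite group and p a prime. If P is a nonabelian normal Sylow p-subgroup of G, then every irreducible character χ of G with P' not contained in ker(χ) has degree divisible by p. -/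
open CategoryTheory

open Module Polynomial

set_option maxHeartbeats 1000000

lemma eig_aux {p : ℕ} {V : Type} [AddCommGroup V] [Module ℂ V]
    [FiniteDimensional ℂ V] (f : V →ₗ[ℂ] V) :
    ∀ (l : List ℂ) (U : Submodule ℂ V),
      (∀ g : V →ₗ[ℂ] V, g * f = f * g → ∀ v ∈ U, g v ∈ U) →
      (∀ v ∈ U, ((l.map fun c => f - c • (1 : V →ₗ[ℂ] V)).prod) v = 0) →
      ¬ p ∣ finrank ℂ U →
      ∃ c ∈ l, ∃ E : Submodule ℂ V,
        (∀ g : V →ₗ[ℂ] V, g * f = f * g → ∀ v ∈ E, g v ∈ E) ∧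
        E ≤ LinearMap.ker (f - c • (1 : V →ₗ[ℂ] V)) ∧ ¬ p ∣ finrank ℂ E := by
  intro l
  induction l with
  | nil =>
    intro U hU hprod hdim
    exfalso
    apply hdim
    have : U = ⊥ := by
      rw [eq_bot_iff]
      intro v hv
      have := hprod v hv
      simpa using this
    rw [this]
    simp
  | cons c₀ l' ih =>
    intro U hU hprod hdim
    set h : V →ₗ[ℂ] V := f - c₀ • 1 with hh
    have hcomm : ∀ g : V →ₗ[ℂ] V, g * f = f * g → g * h = h * g := fun g hg =>
      (Commute.sub_right (hg : Commute g f) ((Commute.one_right g).smul_right c₀) : _)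
    by_cases hpd : p ∣ finrank ℂ (U ⊓ LinearMap.ker h : Submodule ℂ V)
    · -- recurse on image
      set U' : Submodule ℂ V := Submodule.map h U with hU'
      have hUinv' : ∀ g : V →ₗ[ℂ] V, g * f = f * g → ∀ v ∈ U', g v ∈ U' := by
        intro g hg v hv
        obtain ⟨u, hu, rfl⟩ := hv
        refine ⟨g u, hU g hg u hu, ?_⟩
        have := congrArg (fun t : V →ₗ[ℂ] V => t u) (hcomm g hg)
        simpa using this.symm
      have hprod' : ∀ v ∈ U', ((l'.map fun c => f - c • (1 : V →ₗ[ℂ] V)).prod) v = 0 := by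
        intro v hv
        obtain ⟨u, hu, rfl⟩ := hv
        have hc : Commute h (l'.map fun c => f - c • (1 : V →ₗ[ℂ] V)).prod := by
          apply Commute.list_prod_right
          intro b hb
          obtain ⟨c, _, rfl⟩ := List.mem_map.mp hb
          exact ((hcomm _ (Commute.sub_left (Commute.refl f)
            ((Commute.one_left f).smul_left c) : _)).symm : _)
        have h0 := hprod u hu
        rw [List.map_cons, List.prod_cons] at h0
        calc ((l'.map fun c => f - c • (1 : V →ₗ[ℂ] V)).prod) (h u)
            = (((l'.map fun c => f - c • (1 : V →ₗ[ℂ] V)).prod) * h) u := rfl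
          _ = (h * (l'.map fun c => f - c • (1 : V →ₗ[ℂ] V)).prod) u := by rw [hc.eq]
          _ = 0 := h0
      have hrank : finrank ℂ U = finrank ℂ U' + finrank ℂ (U ⊓ LinearMap.ker h : Submodule ℂ V) := by
        have := LinearMap.finrank_range_add_finrank_ker (h ∘ₗ U.subtype)
        have hr : LinearMap.range (h ∘ₗ U.subtype) = U' := by
          rw [LinearMap.range_comp, Submodule.range_subtype]
        have hk : LinearMap.ker (h ∘ₗ U.subtype)
            = Submodule.comap U.subtype (U ⊓ LinearMap.ker h) := by
          rw [LinearMap.ker_comp, Submodule.comap_inf, Submodule.comap_subtype_self, top_inf_eq]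
        have hkeq : finrank ℂ (LinearMap.ker (h ∘ₗ U.subtype))
            = finrank ℂ (U ⊓ LinearMap.ker h : Submodule ℂ V) := by
          rw [hk]
          exact (Submodule.comapSubtypeEquivOfLe inf_le_left).finrank_eq
        rw [hr, hkeq] at this
        omega
      have hdim' : ¬ p ∣ finrank ℂ U' := by
        intro hd
        exact hdim (hrank ▸ Nat.dvd_add hd hpd)
      obtain ⟨c, hc, E, h1, h2, h3⟩ := ih U' hUinv' hprod' hdim'
      exact ⟨c, List.mem_cons_of_mem _ hc, E, h1, h2, h3⟩
    · -- found eigenspace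
      refine ⟨c₀, List.mem_cons_self, U ⊓ LinearMap.ker h, ?_, inf_le_right, hpd⟩
      intro g hg v hv
      refine ⟨hU g hg v hv.1, ?_⟩
      have hv2 : h v = 0 := hv.2
      have : h (g v) = g (h v) := by
        have := congrArg (fun t : V →ₗ[ℂ] V => t v) (hcomm g hg)
        simpa using this.symm
      simp [LinearMap.mem_ker, this, hv2]

lemma key_lemma {p : ℕ} (hp : p.Prime) (n : ℕ) :
    ∀ {V : Type} [AddCommGroup V] [Module ℂ V] [FiniteDimensional ℂ V],
      finrank ℂ V = n → ¬ p ∣ n →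
      ∀ {P : Type} [Group P] [Finite P], IsPGroup p P →
      ∀ (ρ : Representation ℂ P V),
      ∃ v : V, v ≠ 0 ∧ ∀ g : P, ∃ c : ℂ, ρ g v = c • v := by
  induction n using Nat.strong_induction_on with
  | _ n ihn =>
  intro V _ _ _ hn hpn P _ _ hP ρ
  haveI : Fact p.Prime := ⟨hp⟩
  have hn0 : n ≠ 0 := fun h => hpn (h ▸ dvd_zero p)
  have : 0 < finrank ℂ V := by omega
  have : Nontrivial V := Module.nontrivial_of_finrank_pos this
  obtain ⟨v₀, hv₀⟩ := exists_ne (0 : V)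
  -- scalar elements
  classical
  have inv_eq : ∀ (g : P) {c : ℂ}, ρ g = c • (1 : V →ₗ[ℂ] V) →
      c ≠ 0 ∧ ρ g⁻¹ = c⁻¹ • (1 : V →ₗ[ℂ] V) := by
    intro g c hc
    have hc0 : c ≠ 0 := by
      rintro rfl
      have : ρ g⁻¹ (ρ g v₀) = v₀ := by
        rw [← Module.End.mul_apply, ← map_mul, inv_mul_cancel, map_one, Module.End.one_apply]
      rw [hc] at this
      simpa [hv₀] using this.symm
    refine ⟨hc0, ?_⟩
    ext v
    have h1 : ρ g⁻¹ (ρ g v) = v := by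
      rw [← Module.End.mul_apply, ← map_mul, inv_mul_cancel, map_one, Module.End.one_apply]
    have h2 : ρ g v = c • v := by rw [hc]; simp
    rw [h2] at h1
    simp only [map_smul] at h1
    have := congrArg (fun w => c⁻¹ • w) h1
    simpa [smul_smul, inv_mul_cancel₀ hc0] using this
  set Z : Subgroup P :=
    { carrier := {g | ∃ c : ℂ, ρ g = c • (1 : V →ₗ[ℂ] V)}
      one_mem' := ⟨1, by simp⟩
      mul_mem' := by
        rintro a b ⟨c, hc⟩ ⟨d, hd⟩
        refine ⟨c * d, ?_⟩
        rw [map_mul, hc, hd]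
        ext v
        simp [smul_smul, mul_comm]
      inv_mem' := by
        rintro a ⟨c, hc⟩
        exact ⟨c⁻¹, (inv_eq a hc).2⟩ } with hZ
  by_cases hsc : ∀ g : P, g ∈ Z
  · refine ⟨v₀, hv₀, fun g => ?_⟩
    obtain ⟨c, hc⟩ := hsc g
    exact ⟨c, by rw [hc]; simp⟩
  push_neg at hsc
  obtain ⟨g₀, hg₀⟩ := hsc
  haveI : Z.Normal := by
    constructor
    rintro a ⟨c, hc⟩ h
    refine ⟨c, ?_⟩
    rw [map_mul, map_mul, hc]
    ext v
    simp only [Module.End.mul_apply, LinearMap.smul_apply, Module.End.one_apply, map_smul]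
    rw [← Module.End.mul_apply, ← map_mul, mul_inv_cancel, map_one, Module.End.one_apply]
  haveI : Nontrivial (P ⧸ Z) := by
    refine ⟨QuotientGroup.mk g₀, 1, ?_⟩
    rw [Ne, QuotientGroup.eq_one_iff]
    exact hg₀
  haveI : Finite (P ⧸ Z) := Quotient.finite _
  have hPQ : IsPGroup p (P ⧸ Z) := hP.to_quotient Z
  haveI := hPQ.center_nontrivial
  obtain ⟨zc, hzc⟩ := exists_ne (1 : Subgroup.center (P ⧸ Z))
  obtain ⟨z, hz⟩ := QuotientGroup.mk_surjective (zc : P ⧸ Z)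
  have hzZ : z ∉ Z := by
    intro h
    apply hzc
    apply Subtype.ext
    show (zc : P ⧸ Z) = 1
    rw [← hz, QuotientGroup.eq_one_iff]
    exact h
  -- z commutes with everything
  have hzcomm : ∀ g : P, ρ g * ρ z = ρ z * ρ g := by
    intro g
    have hmem : g * z * g⁻¹ * z⁻¹ ∈ Z := by
      rw [← QuotientGroup.eq_one_iff]
      have hcen := Subgroup.mem_center_iff.mp zc.2 (QuotientGroup.mk g)
      calc (QuotientGroup.mk (g * z * g⁻¹ * z⁻¹) : P ⧸ Z)
          = QuotientGroup.mk g * QuotientGroup.mk z * (QuotientGroup.mk g)⁻¹ *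
            (QuotientGroup.mk z)⁻¹ := by
            simp [QuotientGroup.mk_mul, QuotientGroup.mk_inv]
        _ = QuotientGroup.mk g * (zc : P ⧸ Z) * (QuotientGroup.mk g)⁻¹ * (zc : P ⧸ Z)⁻¹ := by
            rw [hz]
        _ = 1 := by rw [hcen]; group
    obtain ⟨c, hc⟩ := hmem
    have hrel : ρ (g * z * g⁻¹) = c • ρ z := by
      have : ρ (g * z * g⁻¹) = ρ (g * z * g⁻¹ * z⁻¹) * ρ z := by
        rw [← map_mul]
        group
      rw [this, hc]
      ext v
      simp
    -- determinant
    have hdet : LinearMap.det (ρ z) ≠ 0 := by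
      intro h0
      have : LinearMap.det (ρ z) * LinearMap.det (ρ z⁻¹) = 1 := by
        rw [← map_mul LinearMap.det, ← map_mul ρ, mul_inv_cancel, map_one ρ,
          map_one LinearMap.det]
      rw [h0, zero_mul] at this
      exact zero_ne_one this
    have hdetconj : LinearMap.det (ρ (g * z * g⁻¹)) = LinearMap.det (ρ z) := by
      rw [map_mul ρ, map_mul ρ, map_mul LinearMap.det, map_mul LinearMap.det]
      have : LinearMap.det (ρ g) * LinearMap.det (ρ g⁻¹) = 1 := by
        rw [← map_mul LinearMap.det, ← map_mul ρ, mul_inv_cancel, map_one ρ,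
          map_one LinearMap.det]
      calc LinearMap.det (ρ g) * LinearMap.det (ρ z) * LinearMap.det (ρ g⁻¹)
          = LinearMap.det (ρ g) * LinearMap.det (ρ g⁻¹) * LinearMap.det (ρ z) := by ring
        _ = LinearMap.det (ρ z) := by rw [this, one_mul]
    have hcn : c ^ n = 1 := by
      have := hdetconj
      rw [hrel, LinearMap.det_smul, hn] at this
      field_simp at this
      exact this
    have hck : ∃ k : ℕ, c ^ (p ^ k) = 1 := by
      obtain ⟨k, hk⟩ := hP (g * z * g⁻¹ * z⁻¹)
      refine ⟨k, ?_⟩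
      have : ρ ((g * z * g⁻¹ * z⁻¹) ^ (p ^ k)) = 1 := by rw [hk, map_one]
      rw [map_pow, hc] at this
      have h2 : (c ^ p ^ k) • (1 : V →ₗ[ℂ] V) = 1 := by
        rw [_root_.smul_pow, one_pow] at this
        exact this
      have := congrArg (fun t : V →ₗ[ℂ] V => t v₀) h2
      simp only [LinearMap.smul_apply, Module.End.one_apply] at this
      by_contra hne
      have : (c ^ p ^ k - 1) • v₀ = 0 := by rw [sub_smul, this, one_smul, sub_self]
      rcases smul_eq_zero.mp this with h | h
      · exact hne (by linear_combination h)
      · exact hv₀ h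
    obtain ⟨k, hk⟩ := hck
    have hc1 : c = 1 := by
      have h1 : orderOf c ∣ n := orderOf_dvd_of_pow_eq_one hcn
      have h2 : orderOf c ∣ p ^ k := orderOf_dvd_of_pow_eq_one hk
      have hcop : Nat.Coprime (p ^ k) n :=
        Nat.Coprime.pow_left k (hp.coprime_iff_not_dvd.mpr hpn)
      have : orderOf c ∣ 1 := by
        have := Nat.dvd_gcd h2 h1
        rwa [Nat.Coprime.gcd_eq_one hcop] at this
      rw [Nat.dvd_one] at this
      exact orderOf_eq_one_iff.mp this
    rw [hc1, one_smul] at hrel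
    have : ρ (g * z) = ρ (z * g) := by
      have h1 : ρ (g * z * g⁻¹ * g) = ρ (z * g) := by
        rw [map_mul _ (g * z * g⁻¹) g, hrel, ← map_mul]
      rw [← h1]
      congr 1
      group
    rw [map_mul, map_mul] at this
    exact this
  -- diagonalize f := ρ z
  set f := ρ z with hf
  obtain ⟨k, hzk⟩ := hP z
  set N := p ^ k with hN
  have hN0 : N ≠ 0 := pow_ne_zero _ hp.pos.ne'
  have hfN : f ^ N = 1 := by rw [hf, ← map_pow, hzk, map_one]
  set q : ℂ[X] := X ^ N - C 1 with hq
  have hqm : q.Monic := monic_X_pow_sub_C 1 hN0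
  have hqsplit : Splits q := IsAlgClosed.splits q
  set L : List ℂ := q.roots.toList with hL
  have hqeq : q = (L.map fun a => X - C a).prod := by
    have h := hqsplit.eq_prod_roots_of_monic hqm
    rw [h]
    calc (Multiset.map (fun a => X - C a) q.roots).prod
        = (Multiset.map (fun a => X - C a) ↑q.roots.toList).prod := by
          rw [Multiset.coe_toList]
      _ = ((↑(q.roots.toList.map fun a => X - C a) : Multiset ℂ[X])).prod := by
          rw [Multiset.map_coe]
      _ = (q.roots.toList.map fun a => X - C a).prod := Multiset.prod_coe _
  have haeval : ((L.map fun c => f - c • (1 : V →ₗ[ℂ] V)).prod) = 0 := by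
    have h1 : Polynomial.aeval f q = 0 := by
      rw [hq]
      simp only [map_sub, map_pow, Polynomial.aeval_X, Polynomial.aeval_C]
      rw [hfN]
      simp [Algebra.algebraMap_eq_smul_one]
    rw [hqeq] at h1
    rw [← h1]
    rw [← List.prod_map_hom]
    congr 1
    exact List.map_congr_left fun a _ => by
      simp [Function.comp, map_sub, aeval_X, aeval_C, Algebra.algebraMap_eq_smul_one]
  obtain ⟨c, hcL, E, hEinv, hEker, hEdim⟩ :=
    eig_aux (p := p) f L ⊤ (fun g _ v _ => trivial)
      (fun v _ => by rw [haeval]; simp)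
      (by rwa [finrank_top, hn])
  have hEne : E ≠ ⊤ := by
    intro h
    apply hzZ
    refine ⟨c, ?_⟩
    have : LinearMap.ker (f - c • (1 : V →ₗ[ℂ] V)) = ⊤ := top_unique (h ▸ hEker)
    have h0 : f - c • (1 : V →ₗ[ℂ] V) = 0 := LinearMap.ker_eq_top.mp this
    have := sub_eq_zero.mp h0
    exact this
  have hElt : finrank ℂ E < n := by
    rw [← hn]
    exact Submodule.finrank_lt hEne
  have hres : ∀ g : P, ∀ v ∈ E, ρ g v ∈ E := fun g => hEinv (ρ g) (hzcomm g)
  set ρ' : Representation ℂ P E :=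
    { toFun := fun g => (ρ g).restrict (hres g)
      map_one' := by ext v; simp [LinearMap.restrict_apply]
      map_mul' := by intro a b; ext v; simp [LinearMap.restrict_apply] } with hρ'
  obtain ⟨w, hw0, hw⟩ := ihn (finrank ℂ E) hElt rfl (fun hd => hEdim hd) hP ρ'
  refine ⟨(w : V), by simpa using hw0, fun g => ?_⟩
  obtain ⟨c', hc'⟩ := hw g
  refine ⟨c', ?_⟩
  have := congrArg (Subtype.val) hc'
  simpa [hρ', LinearMap.restrict_apply] using this

theorem p_dvd_degree_of_not_ker_derived_sylow (G : Type) [Group G] [Fintype G]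
    (p : ℕ) (hp : p.Prime) (P : Sylow p G) (hnormal : (P : Subgroup G).Normal)
    (hnonab : ¬ ∀ x y : (P : Subgroup G), x * y = y * x)
    (V : FDRep ℂ G) [Simple V]
    (hker : ¬ ∀ g ∈ Subgroup.map ((P : Subgroup G)).subtype
        (commutator ↥(P : Subgroup G)), V.ρ g = 1) :
    p ∣ Module.finrank ℂ V := by
  classical
  by_contra hdvd
  set Psub : Subgroup G := (P : Subgroup G) with hPsub
  haveI : Psub.Normal := hnormal
  set ρP : Representation ℂ ↥Psub V := V.ρ.comp Psub.subtype with hρP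
  obtain ⟨v, hv0, hv⟩ := key_lemma hp (finrank ℂ V) rfl hdvd P.isPGroup' ρP
  -- the group of elements fixing v
  have hvfix : ∀ g ∈ commutator ↥Psub, ρP g v = v := by
    have hTle : commutator ↥Psub ≤
        { carrier := {g : ↥Psub | ρP g v = v}
          one_mem' := by simp
          mul_mem' := by
            intro a b ha hb
            show ρP (a * b) v = v
            rw [map_mul, Module.End.mul_apply, hb, ha]
          inv_mem' := by
            intro a ha
            show ρP a⁻¹ v = v
            have : ρP a⁻¹ (ρP a v) = v := by
              rw [← Module.End.mul_apply, ← map_mul, inv_mul_cancel, map_one,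
                Module.End.one_apply]
            rwa [ha] at this } := by
      rw [commutator_def, Subgroup.commutator_le]
      intro a _ b _
      show ρP (a * b * a⁻¹ * b⁻¹) v = v
      obtain ⟨ca, hca⟩ := hv a
      obtain ⟨cb, hcb⟩ := hv b
      have hinv : ∀ (g : ↥Psub) (c : ℂ), ρP g v = c • v → c ≠ 0 ∧ ρP g⁻¹ v = c⁻¹ • v := by
        intro g c hc
        have h1 : ρP g⁻¹ (ρP g v) = v := by
          rw [← Module.End.mul_apply, ← map_mul, inv_mul_cancel, map_one, Module.End.one_apply]
        have hc0 : c ≠ 0 := by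
          rintro rfl
          rw [hc, zero_smul, map_zero] at h1
          exact hv0 h1.symm
        refine ⟨hc0, ?_⟩
        rw [hc, map_smul] at h1
        have := congrArg (fun w => c⁻¹ • w) h1
        simpa [smul_smul, inv_mul_cancel₀ hc0] using this
      obtain ⟨ha0, hainv⟩ := hinv a ca hca
      obtain ⟨hb0, hbinv⟩ := hinv b cb hcb
      show ρP (a * b * a⁻¹ * b⁻¹) v = v
      rw [map_mul, map_mul, map_mul]
      simp only [Module.End.mul_apply]
      simp only [hbinv, map_smul, hainv, hcb, hca, smul_smul]
      rw [show cb⁻¹ * ca⁻¹ * cb * ca = 1 by field_simp, one_smul]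
    exact fun g hg => hTle hg
  -- the fixed subspace of the commutator is a subrepresentation
  set W : Submodule ℂ V :=
    { carrier := {u : V | ∀ g ∈ commutator ↥Psub, ρP g u = u}
      add_mem' := by
        intro a b ha hb g hg
        rw [map_add, ha g hg, hb g hg]
      zero_mem' := by intro g hg; rw [map_zero]
      smul_mem' := by
        intro c u hu g hg
        rw [map_smul, hu g hg] } with hW
  have hvW : v ∈ W := hvfix
  haveI : (Subgroup.map Psub.subtype (commutator ↥Psub)).Normal := by
    infer_instance
  have hWinv : ∀ (g : G), ∀ u ∈ W, V.ρ g u ∈ W := by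
    intro g u hu h hh
    have hmem : (h : G) ∈ Subgroup.map Psub.subtype (commutator ↥Psub) :=
      ⟨h, hh, rfl⟩
    have hconj : g⁻¹ * (h : G) * g ∈ Subgroup.map Psub.subtype (commutator ↥Psub) := by
      have := (inferInstance : (Subgroup.map Psub.subtype (commutator ↥Psub)).Normal).conj_mem
        _ hmem g⁻¹
      simpa using this
    obtain ⟨h₀, hh₀, hh₀eq⟩ := hconj
    show V.ρ (h : G) (V.ρ g u) = V.ρ g u
    have : V.ρ (h : G) (V.ρ g u) = V.ρ g (V.ρ (g⁻¹ * (h : G) * g) u) := by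
      rw [← Module.End.mul_apply, ← map_mul, ← Module.End.mul_apply, ← map_mul]
      congr 1
      group
    rw [this, ← hh₀eq]
    have : V.ρ (Psub.subtype h₀) u = u := hu h₀ hh₀
    rw [this]
  -- averaging projection onto W
  obtain ⟨C, hC⟩ := Submodule.exists_isCompl W
  set π₀ : V →ₗ[ℂ] V := W.subtype ∘ₗ (Submodule.projectionOnto W C hC) with hπ₀
  have hπ₀W : ∀ u : V, π₀ u ∈ W := fun u => Submodule.coe_mem _
  have hπ₀id : ∀ u ∈ W, π₀ u = u := by
    intro u hu
    show (W.subtype) ((Submodule.projectionOnto W C hC) u) = u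
    rw [Submodule.projectionOnto_apply_left hC ⟨u, hu⟩]
    rfl
  set π : V →ₗ[ℂ] V :=
    (Fintype.card G : ℂ)⁻¹ • ∑ g : G, (V.ρ g) ∘ₗ π₀ ∘ₗ (V.ρ g⁻¹) with hπ
  have hcard : (Fintype.card G : ℂ) ≠ 0 := by
    simp [Fintype.card_ne_zero]
  have hπW : ∀ u : V, π u ∈ W := by
    intro u
    show ((Fintype.card G : ℂ)⁻¹ • ∑ g : G, (V.ρ g) ∘ₗ π₀ ∘ₗ (V.ρ g⁻¹)) u ∈ W
    simp only [LinearMap.smul_apply, LinearMap.sum_apply, LinearMap.comp_apply]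
    apply W.smul_mem
    apply Submodule.sum_mem
    intro g _
    exact hWinv g _ (hπ₀W _)
  have hπid : ∀ u ∈ W, π u = u := by
    intro u hu
    rw [hπ]
    simp only [LinearMap.smul_apply, LinearMap.sum_apply, LinearMap.comp_apply]
    have : ∀ g : G, V.ρ g (π₀ (V.ρ g⁻¹ u)) = u := by
      intro g
      rw [hπ₀id _ (hWinv g⁻¹ u hu), ← Module.End.mul_apply, ← map_mul, mul_inv_cancel,
        map_one, Module.End.one_apply]
    rw [Finset.sum_congr rfl fun g _ => this g, Finset.sum_const, Finset.card_univ]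
    rw [← Nat.cast_smul_eq_nsmul ℂ, smul_smul, inv_mul_cancel₀ hcard, one_smul]
  have hπcomm : ∀ g : G, V.ρ g ∘ₗ π = π ∘ₗ V.ρ g := by
    intro h
    ext u
    simp only [LinearMap.comp_apply, hπ, LinearMap.smul_apply, LinearMap.sum_apply,
      map_smul, map_sum]
    congr 1
    apply Fintype.sum_equiv (Equiv.mulLeft h)
    intro g
    show V.ρ h ((V.ρ g) (π₀ ((V.ρ g⁻¹) u)))
        = V.ρ (h * g) (π₀ ((V.ρ (h * g)⁻¹) ((V.ρ h) u)))
    have e1 : V.ρ (h * g)⁻¹ ((V.ρ h) u) = V.ρ g⁻¹ u := by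
      rw [← Module.End.mul_apply, ← map_mul]
      congr 1
      group
    rw [e1, map_mul]
    rfl
  -- Schur: the averaged projection is a scalar, hence the identity
  set Pi : V ⟶ V := ⟨InducedCategory.homMk (ModuleCat.ofHom π), fun g => by
    ext u
    exact congrArg (fun f => f u) (hπcomm g).symm⟩ with hPi
  have hrank1 : finrank ℂ (V ⟶ V) = 1 := by
    rw [FDRep.finrank_hom_simple_simple V V, if_pos ⟨Iso.refl V⟩]
  have hid_ne : (𝟙 V : V ⟶ V) ≠ 0 := by
    intro h
    have h2 := congrArg (fun f : V ⟶ V => f.hom v) h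
    simp only [Action.id_hom, Action.zero_hom] at h2
    exact hv0 h2
  obtain ⟨c, hc⟩ := (finrank_eq_one_iff_of_nonzero' (𝟙 V) hid_ne).mp hrank1 Pi
  have hhom := congrArg Action.Hom.hom hc
  rw [Action.smul_hom, Action.id_hom] at hhom
  -- π = c • id as linear maps
  have hπc : ∀ u : V, π u = c • u := by
    intro u
    have := congrArg (fun f => f u) hhom
    exact (this : _).symm
  have hc1 : c = 1 := by
    have h1 : π v = v := hπid v hvW
    have h2 : π v = c • v := hπc v
    have : (c - 1) • v = 0 := by
      rw [sub_smul, one_smul, ← h2, h1, sub_self]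
    rcases smul_eq_zero.mp this with h | h
    · linear_combination h
    · exact absurd h hv0
  have hWtop : ∀ u : V, u ∈ W := by
    intro u
    have : π u = u := by rw [hπc, hc1, one_smul]
    rw [← this]
    exact hπW u
  apply hker
  intro g hg
  obtain ⟨h, hh, rfl⟩ := hg
  ext u
  show V.ρ (Psub.subtype h) u = u
  exact hWtop u h hh
end
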